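/- Let k be an even integer with k ≥ 4, let d = (3k+4)/2, and let C be a symmetric (d,k) circuit code of length 4k+6 whose transition sequence has the form T(C) = (ω₁, x, ω₂, ω₁, x, ω₂), where ω₁ = (1,2,...,k+2) and ω₂ = (β₁,...,β_k). If x ∈ {1,2} and β₁ = 3, then the segment (β₂,...,β_k, 1, 2, 3, 4) of T(C) is a bit run of length k+3. -/

import Mathlib

/-- The graph of the `d`-dimensional hypercube: vertices are binary vectors of
length `d`, adjacent iff they differ in exactly one coordinate. -/
def hypercube (d : ℕ) : SimpleGraph (Fin d → Bool) where
  Adj x y := hammingDist x y = 1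
  symm := by
    constructor
    intro x y h
    rwa [hammingDist_comm]
  loopless := by
    constructor
    intro x h
    simp [hammingDist_self] at h

/-- Distance along a cycle of length `N` between positions `i` and `j`. -/
def cycDist {N : ℕ} (i j : ZMod N) : ℕ := min (i - j).val (j - i).val

/-- `x : ZMod N → (Fin d → Bool)` is a `(d,k)` circuit code of length `N`:
a cycle in the hypercube `I(d)` satisfying the spread-`k` distance requirement. -/
structure IsCircuitCode (d k N : ℕ) (x : ZMod N → Fin d → Bool) : Prop where
  inj : Function.Injective x
  adj : ∀ i : ZMod N, (hypercube d).Adj (x i) (x (i + 1))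
  spread : ∀ i j : ZMod N, min (cycDist i j) k ≤ (hypercube d).dist (x i) (x j)

/-- `τ` is the transition sequence of the cycle `x`: `τ i` is the unique
coordinate in which `x i` and `x (i+1)` differ. -/
def IsTransitionSeq {d N : ℕ} (x : ZMod N → Fin d → Bool) (τ : ZMod N → Fin d) : Prop :=
  ∀ (i : ZMod N) (j : Fin d), x (i + 1) j ≠ x i j ↔ j = τ i

/-- The segment of `τ` of length `m` starting at position `start` is a bit run:
all of its entries are distinct. -/
def IsBitRun {d N : ℕ} (τ : ZMod N → Fin d) (start : ZMod N) (m : ℕ) : Prop :=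
  ∀ a b : Fin m, τ (start + ((a : ℕ) : ZMod N)) = τ (start + ((b : ℕ) : ZMod N)) → a = b

/-- `δ(ω)`: the number of coordinates appearing an odd number of times in the
segment of `τ` of length `m` starting at `start`. -/
def segDelta {d N : ℕ} (τ : ZMod N → Fin d) (start : ZMod N) (m : ℕ) : ℕ :=
  (Finset.univ.filter fun c : Fin d =>
    Odd (Finset.univ.filter fun t : Fin m => τ (start + ((t : ℕ) : ZMod N)) = c).card).card

/-!
Along the cycle, `x i` and `x (i + m)` differ exactly in the coordinates that occur an odd
number of times in the window `τ i, …, τ (i + m - 1)`. Every letter occurring twice in the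
window therefore lowers this Hamming distance by at least two, and the spread condition gives
`min m k + 2 r ≤ m` for a window of length `m ≤ N / 2` with `r` repeated letters. So windows of
length at most `k + 1` are bit runs, and a window of length `k + 5` has at most two repeated
letters.

In the segment `β₂ … β_k 1 2 3 4` only pairs at distance `k + 1` or `k + 2` remain; by symmetry
they compare `β₂` or `β₃` with the second copies of `3` and `4` from `ω₁`. `β₂ = 3` contradicts
`β₁ = 3`, and `β₂ = 4` or `β₃ = 4` would make `x`, `3`, `4` three repeated letters of the window
`x β₁ … β_k 1 2 3 4`.
-/

open Finset

def segCount {d N : ℕ} (τ : ZMod N → Fin d) (s : ZMod N) (m : ℕ) (c : Fin d) : ℕ :=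
  #{t : Fin m | τ (s + ((t : ℕ) : ZMod N)) = c}

section Segments

variable {d N : ℕ} (τ : ZMod N → Fin d) (s : ZMod N)

theorem segDelta_eq_card_odd_segCount (m : ℕ) :
    segDelta τ s m = #{c | Odd (segCount τ s m c)} := rfl

theorem segCount_succ (m : ℕ) (c : Fin d) :
    segCount τ s (m + 1) c = segCount τ s m c + if τ (s + m) = c then 1 else 0 := by
  simp only [segCount, card_filter, Fin.sum_univ_castSucc, Fin.val_castSucc, Fin.val_last]

theorem sum_segCount (m : ℕ) : ∑ c, segCount τ s m c = m := by
  simpa [segCount] using (card_eq_sum_card_fiberwise (s := univ) (t := univ)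
    (f := fun t : Fin m => τ (s + ((t : ℕ) : ZMod N))) fun _ _ => mem_univ _).symm

variable {τ}

theorem two_le_segCount {s : ZMod N} {m t₁ t₂ : ℕ} {c : Fin d} (h₁₂ : t₁ < t₂) (h₂ : t₂ < m)
    (h₁c : τ (s + t₁) = c) (h₂c : τ (s + t₂) = c) : 2 ≤ segCount τ s m c :=
  one_lt_card.mpr ⟨⟨t₁, by omega⟩, by simpa using h₁c, ⟨t₂, h₂⟩, by simpa using h₂c,
    by simp [Fin.ext_iff, h₁₂.ne]⟩

theorem two_le_segCount_natCast {s m p q : ℕ} (hs : s ≤ p) (hpq : p < q) (hq : q < s + m)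
    (h : τ (q : ZMod N) = τ p) : 2 ≤ segCount τ s m (τ p) :=
  two_le_segCount (t₁ := p - s) (t₂ := q - s) (by omega) (by omega)
    (by rw [← Nat.cast_add, Nat.add_sub_cancel' hs])
    (by rw [← Nat.cast_add, Nat.add_sub_cancel' (by omega), h])

theorem segDelta_add_two_mul_card_le {s : ZMod N} {m : ℕ} {P : Finset (Fin d)}
    (hP : ∀ c ∈ P, 2 ≤ segCount τ s m c) : segDelta τ s m + 2 * #P ≤ m := by
  have hpoint (c : Fin d) :
      (if Odd (segCount τ s m c) then 1 else 0) + (if c ∈ P then 2 else 0) ≤ segCount τ s m c := by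
    have := hP c
    split_ifs with hodd hc <;> grind
  calc segDelta τ s m + 2 * #P
      = ∑ c, ((if Odd (segCount τ s m c) then 1 else 0) + (if c ∈ P then 2 else 0)) := by
        rw [sum_add_distrib, segDelta_eq_card_odd_segCount, card_filter, sum_ite_mem,
          univ_inter, sum_const, smul_eq_mul, mul_comm]
    _ ≤ ∑ c, segCount τ s m c := sum_le_sum fun c _ => hpoint c
    _ = m := sum_segCount τ s m

end Segments

theorem hypercube_dist_le_hammingDist {d : ℕ} (u v : Fin d → Bool) :
    (hypercube d).dist u v ≤ hammingDist u v := by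
  suffices h : ∀ n (u : Fin d → Bool), hammingDist u v = n →
      ∃ p : (hypercube d).Walk u v, p.length = n by
    obtain ⟨p, hp⟩ := h _ u rfl
    exact hp ▸ SimpleGraph.dist_le p
  intro n
  induction n with
  | zero =>
    intro u h
    obtain rfl := hammingDist_eq_zero.mp h
    exact ⟨.nil, rfl⟩
  | succ n ih =>
    intro u h
    obtain ⟨c, hc⟩ : ∃ c, u c ≠ v c := by
      by_contra! hall
      simp [funext hall] at h
    set w := Function.update u c (v c)
    have huw : ({i | u i ≠ w i} : Finset (Fin d)) = {c} := by
      ext i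
      by_cases hi : i = c <;> simp [w, hi, hc]
    have hwv : ({i | w i ≠ v i} : Finset (Fin d)) = ({i | u i ≠ v i} : Finset (Fin d)).erase c := by
      ext i
      by_cases hi : i = c <;> simp [w, hi]
    have hadj : (hypercube d).Adj u w := by
      show #{i | u i ≠ w i} = 1
      rw [huw, card_singleton]
    obtain ⟨p, hp⟩ := ih w (by
      show #{i | w i ≠ v i} = n
      rw [hwv, card_erase_of_mem (by simpa using hc)]
      exact Nat.sub_eq_of_eq_add h)
    exact ⟨.cons hadj p, by simp [hp]⟩

namespace IsTransitionSeq

variable {d N : ℕ} {x : ZMod N → Fin d → Bool} {τ : ZMod N → Fin d}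

theorem apply_add_ne_iff_odd_segCount (hτ : IsTransitionSeq x τ) (i : ZMod N) (m : ℕ)
    (c : Fin d) : x (i + m) c ≠ x i c ↔ Odd (segCount τ i m c) := by
  induction m with
  | zero => simp [segCount]
  | succ m ih =>
    have hstep := hτ (i + m) c
    rw [segCount_succ, Nat.cast_succ, ← add_assoc]
    by_cases hc : τ (i + m) = c
    · rw [if_pos hc, Nat.odd_add_one, ← ih]
      have := hstep.mpr hc.symm
      revert this
      cases x (i + m + 1) c <;> cases x (i + m) c <;> cases x i c <;> simp
    · rw [if_neg hc, add_zero, not_not.mp (mt hstep.mp (Ne.symm hc)), ih]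

theorem hammingDist_eq_segDelta (hτ : IsTransitionSeq x τ) (i : ZMod N) (m : ℕ) :
    hammingDist (x i) (x (i + m)) = segDelta τ i m := by
  rw [hammingDist, segDelta_eq_card_odd_segCount]
  congr 1
  ext c
  simp only [mem_filter, mem_univ, true_and, ne_comm (a := x i c),
    hτ.apply_add_ne_iff_odd_segCount]

end IsTransitionSeq

theorem cycDist_add_natCast {N : ℕ} [NeZero N] (i : ZMod N) {m : ℕ} (hm : 2 * m ≤ N) :
    cycDist i (i + m) = m := by
  have hN := NeZero.pos N
  have hval : (m : ZMod N).val = m := ZMod.val_cast_of_lt (by omega)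
  rw [cycDist, sub_add_cancel_left, add_sub_cancel_left, ZMod.neg_val', hval]
  rcases m.eq_zero_or_pos with rfl | hpos
  · simp
  · rw [Nat.mod_eq_of_lt (by omega)]
    omega

namespace IsCircuitCode

variable {d k N : ℕ} [NeZero N] {x : ZMod N → Fin d → Bool} {τ : ZMod N → Fin d}

theorem min_le_segDelta (hx : IsCircuitCode d k N x) (hτ : IsTransitionSeq x τ) (i : ZMod N)
    {m : ℕ} (hm : 2 * m ≤ N) : min m k ≤ segDelta τ i m :=
  calc min m k = min (cycDist i (i + m)) k := by rw [cycDist_add_natCast i hm]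
    _ ≤ (hypercube d).dist (x i) (x (i + m)) := hx.spread _ _
    _ ≤ hammingDist (x i) (x (i + m)) := hypercube_dist_le_hammingDist _ _
    _ = segDelta τ i m := hτ.hammingDist_eq_segDelta i m

theorem min_add_two_mul_card_le (hx : IsCircuitCode d k N x) (hτ : IsTransitionSeq x τ)
    (i : ZMod N) {m : ℕ} (hm : 2 * m ≤ N) {P : Finset (Fin d)}
    (hP : ∀ c ∈ P, 2 ≤ segCount τ i m c) : min m k + 2 * #P ≤ m :=
  (Nat.add_le_add_right (hx.min_le_segDelta hτ i hm) _).trans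
    (segDelta_add_two_mul_card_le hP)

theorem card_le_two_of_two_le_segCount (hx : IsCircuitCode d k N x) (hτ : IsTransitionSeq x τ)
    (i : ZMod N) {m : ℕ} (hm : 2 * m ≤ N) (hmk : m ≤ k + 5) {P : Finset (Fin d)}
    (hP : ∀ c ∈ P, 2 ≤ segCount τ i m c) : #P ≤ 2 := by
  have := hx.min_add_two_mul_card_le hτ i hm hP
  omega

theorem transition_ne (hx : IsCircuitCode d k N x) (hτ : IsTransitionSeq x τ) (i : ZMod N)
    {L : ℕ} (hL : 1 ≤ L) (hLk : L ≤ k) (hLN : 2 * (L + 1) ≤ N) : τ (i + L) ≠ τ i := by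
  intro h
  have := hx.min_add_two_mul_card_le hτ i hLN (P := {τ i}) fun c hc => by
    rw [mem_singleton.mp hc]
    exact two_le_segCount (t₁ := 0) hL (Nat.lt_succ_self L) (by simp) h
  rw [card_singleton] at this
  omega

end IsCircuitCode

theorem IsBitRun.of_ne {d N : ℕ} {τ : ZMod N → Fin d} {s : ZMod N} {m : ℕ}
    (h : ∀ a b : ℕ, a < b → b < m → τ (s + a) ≠ τ (s + b)) : IsBitRun τ s m := by
  intro a b hab
  by_contra hne
  rcases lt_or_gt_of_ne hne with hlt | hlt
  · exact h a b hlt b.isLt hab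
  · exact h b a hlt a.isLt hab.symm

theorem IsCircuitCode.transition_val_ne_three {k d : ℕ} (hk : 2 ≤ k)
    {x : ZMod (4 * k + 6) → Fin d → Bool} (hx : IsCircuitCode d k (4 * k + 6) x)
    {τ : ZMod (4 * k + 6) → Fin d} (hτ : IsTransitionSeq x τ)
    (hω : ∀ i : ℕ, i ≤ 3 → (τ ((i + (2 * k + 3) : ℕ) : ZMod (4 * k + 6))).val = i)
    (hx12 : (τ ((k + 2 : ℕ) : ZMod (4 * k + 6))).val = 0 ∨
            (τ ((k + 2 : ℕ) : ZMod (4 * k + 6))).val = 1)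
    (hβ₁ : (τ ((k + 3 : ℕ) : ZMod (4 * k + 6))).val = 2)
    {p : ℕ} (hp : k + 4 ≤ p) (hp' : p ≤ k + 5) : (τ (p : ZMod (4 * k + 6))).val ≠ 3 := by
  intro hp3
  set P : Finset (Fin d) := {τ ((k + 2 : ℕ) : ZMod (4 * k + 6)),
    τ ((k + 3 : ℕ) : ZMod (4 * k + 6)), τ (p : ZMod (4 * k + 6))} with hPdef
  have hP : #P = 3 :=
    card_eq_three.mpr ⟨_, _, _, Fin.ne_of_val_ne (by omega), Fin.ne_of_val_ne (by omega),
      Fin.ne_of_val_ne (by omega), rfl⟩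
  suffices hrep : ∀ c ∈ P, 2 ≤ segCount τ ((k + 2 : ℕ) : ZMod (4 * k + 6)) (k + 5) c by
    have := hx.card_le_two_of_two_le_segCount hτ _ (by omega) le_rfl hrep
    omega
  simp only [hPdef, mem_insert, mem_singleton]
  rintro c (rfl | rfl | rfl)
  · rcases hx12 with h | h
    · exact two_le_segCount_natCast le_rfl (q := 0 + (2 * k + 3)) (by omega) (by omega)
        (Fin.ext (by rw [h, hω 0 (by omega)]))
    · exact two_le_segCount_natCast le_rfl (q := 1 + (2 * k + 3)) (by omega) (by omega)
        (Fin.ext (by rw [h, hω 1 (by omega)]))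
  · exact two_le_segCount_natCast (q := 2 + (2 * k + 3)) (by omega) (by omega) (by omega)
      (Fin.ext (by rw [hβ₁, hω 2 (by omega)]))
  · exact two_le_segCount_natCast (q := 3 + (2 * k + 3)) (by omega) (by omega) (by omega)
      (Fin.ext (by rw [hp3, hω 3 (by omega)]))

/-- Coordinates are `0`-based: `ω₁ = (1, …, k+2)` reads `τ i = i` for `i ≤ k + 1`, the
letter `x` sits at position `k + 2`, `β₁` at `k + 3`, and the segment starts at `k + 4`. -/
theorem stmt_15_general (k d : ℕ) (hk4 : 4 ≤ k)
    (x : ZMod (4 * k + 6) → Fin d → Bool)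
    (hx : IsCircuitCode d k (4 * k + 6) x)
    (τ : ZMod (4 * k + 6) → Fin d) (hτ : IsTransitionSeq x τ)
    (hsym : ∀ i : ZMod (4 * k + 6), τ (i + ((2 * k + 3 : ℕ) : ZMod (4 * k + 6))) = τ i)
    (hω₁ : ∀ i : ℕ, i ≤ k + 1 → (τ ((i : ℕ) : ZMod (4 * k + 6))).val = i)
    (hx12 : (τ ((k + 2 : ℕ) : ZMod (4 * k + 6))).val = 0 ∨
            (τ ((k + 2 : ℕ) : ZMod (4 * k + 6))).val = 1)
    (hβ₁ : (τ ((k + 3 : ℕ) : ZMod (4 * k + 6))).val = 2) :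
    IsBitRun τ ((k + 4 : ℕ) : ZMod (4 * k + 6)) (k + 3) := by
  have hω₁' (i : ℕ) (hi : i ≤ k + 1) :
      (τ ((i + (2 * k + 3) : ℕ) : ZMod (4 * k + 6))).val = i := by
    rw [Nat.cast_add, hsym, hω₁ i hi]
  refine IsBitRun.of_ne fun a b hab hb heq => ?_
  rw [← Nat.cast_add, ← Nat.cast_add] at heq
  by_cases hba : b - a ≤ k
  · refine hx.transition_ne hτ ((k + 4 + a : ℕ) : ZMod (4 * k + 6)) (L := b - a) (by omega) hba
      (by omega) ?_
    rw [← Nat.cast_add, show k + 4 + a + (b - a) = k + 4 + b by omega, heq]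
  obtain rfl | ⟨rfl, rfl⟩ : b = k + 2 ∨ b = k + 1 ∧ a = 0 := by omega
  · refine hx.transition_val_ne_three (by omega) hτ (fun i hi => hω₁' i (by omega)) hx12 hβ₁
      (p := k + 4 + a) (by omega) (by omega) ?_
    rw [heq, show k + 4 + (k + 2) = 3 + (2 * k + 3) by omega, hω₁' 3 (by omega)]
  · refine hx.transition_ne hτ ((k + 3 : ℕ) : ZMod (4 * k + 6)) (L := 1) le_rfl (by omega)
      (by omega) (Fin.ext ?_)
    rw [← Nat.cast_add, hβ₁, show k + 3 + 1 = k + 4 + 0 from rfl, heq,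
      show k + 4 + (k + 1) = 2 + (2 * k + 3) by omega, hω₁' 2 (by omega)]

/-- For even `k ≥ 4`, `d = (3k+4)/2`, and a symmetric `(d,k)` circuit code of length
`4k+6` whose transition sequence has the form `(ω₁, x, ω₂, ω₁, x, ω₂)` with
`ω₁ = (1,...,k+2)` (coordinates modeled 0-based as `Fin d`): if `x ∈ {1,2}` (0-based
value `0` or `1`) and `β₁ = 3` (0-based value `2`, at position `k+3`), then the
segment `(β₂,...,β_k,1,2,3,4)` (starting at position `k+4`, of length `k+3`)
is a bit run. -/
theorem stmt_15 (k d : ℕ) (hk : Even k) (hk4 : 4 ≤ k) (hd : 2 * d = 3 * k + 4)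
    (x : ZMod (4 * k + 6) → Fin d → Bool)
    (hx : IsCircuitCode d k (4 * k + 6) x)
    (τ : ZMod (4 * k + 6) → Fin d) (hτ : IsTransitionSeq x τ)
    (hsym : ∀ i : ZMod (4 * k + 6), τ (i + ((2 * k + 3 : ℕ) : ZMod (4 * k + 6))) = τ i)
    (hω₁ : ∀ i : ℕ, i ≤ k + 1 → (τ ((i : ℕ) : ZMod (4 * k + 6))).val = i)
    (hx12 : (τ ((k + 2 : ℕ) : ZMod (4 * k + 6))).val = 0 ∨
            (τ ((k + 2 : ℕ) : ZMod (4 * k + 6))).val = 1)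
    (hβ₁ : (τ ((k + 3 : ℕ) : ZMod (4 * k + 6))).val = 2) :
    IsBitRun τ ((k + 4 : ℕ) : ZMod (4 * k + 6)) (k + 3) :=
  stmt_15_general k d hk4 x hx τ hτ hsym hω₁ hx12 hβ₁
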